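/- arXiv:math/0310384 — 3 statements merged into one kernel-verified Lean document; each statement's English description precedes it below -/
import Mathlib

section
/- Let α be irrational and n ≥ 1. Then max_{s,t ∈ [n]} | |β_α([s]) ∩ [t]| − s·t/n | ≤ 2 · max_{1 ≤ s ≤ n} d*(A_s(α)), where [m] = {1,…,m}, A_s(α) = { {αx} : x ∈ [s] }, and for a finite set A ⊂ [0,1), d*(A) = sup_{0 ≤ x ≤ 1} | |A ∩ [0,x]| − x·|A| |. -/
open Finset

/-- An interval of `ZMod n`: the projection of a set of consecutive integers. -/
def IsInterval {n : ℕ} (I : Finset (ZMod n)) : Prop :=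
  ∃ a len : ℕ, I = (Finset.range len).image (fun i : ℕ => ((a + i : ℕ) : ZMod n))

/-- An initial interval of `ZMod n`: the projection of `{0, 1, …, M}` for some `M ≥ 0`. -/
def IsInitialInterval {n : ℕ} (I : Finset (ZMod n)) : Prop :=
  ∃ M : ℕ, I = (Finset.range (M + 1)).image (fun i : ℕ => ((i : ℕ) : ZMod n))

/-- The discrepancy of `S` in `T`: `| |S ∩ T| - |S||T|/n |`. -/
noncomputable def discIn {n : ℕ} (S T : Finset (ZMod n)) : ℝ :=
  |((S ∩ T).card : ℝ) - (S.card : ℝ) * (T.card : ℝ) / (n : ℝ)|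

/-- The discrepancy `D(σ)` of a permutation of `ZMod n`: the max of `D_J(σ(I))`
over all intervals `I`, `J` of `ZMod n`. -/
noncomputable def disc {n : ℕ} (σ : Equiv.Perm (ZMod n)) : ℝ :=
  sSup {d : ℝ | ∃ I J : Finset (ZMod n), IsInterval I ∧ IsInterval J ∧ d = discIn (I.image σ) J}

/-- The discrepancy `D*(σ)`: the max of `D_J(σ(I))` over all initial intervals `I`, `J`. -/
noncomputable def discStar {n : ℕ} (σ : Equiv.Perm (ZMod n)) : ℝ :=
  sSup {d : ℝ | ∃ I J : Finset (ZMod n),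
    IsInitialInterval I ∧ IsInitialInterval J ∧ d = discIn (I.image σ) J}

/-- `e(x) = exp(2πix)`. -/
noncomputable def e (x : ℝ) : ℂ := Complex.exp (2 * Real.pi * Complex.I * x)

/-- The multiplication permutation `ψ_k : s ↦ k·s` of `ZMod n`, for a unit `k`. -/
def psi {n : ℕ} (k : (ZMod n)ˣ) : Equiv.Perm (ZMod n) where
  toFun s := (k : ZMod n) * s
  invFun s := ((k⁻¹ : (ZMod n)ˣ) : ZMod n) * s
  left_inv s := Units.inv_mul_cancel_left k s
  right_inv s := Units.mul_inv_cancel_left k s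

/-- The Sós permutation value: `β_α(t) = |{s ∈ [n] : {αs} ≤ {αt}}|`. -/
noncomputable def sos (α : ℝ) (n t : ℕ) : ℕ :=
  (@Finset.filter ℕ (fun s => Int.fract (α * s) ≤ Int.fract (α * t))
    (Classical.decPred _) (Finset.Icc 1 n)).card

/-- `A_s(α) = { {αx} : x ∈ [s] }`. -/
noncomputable def fracSet (α : ℝ) (s : ℕ) : Finset ℝ :=
  (Finset.Icc 1 s).image (fun x : ℕ => Int.fract (α * x))

/-- `d*(A) = sup_{0 ≤ x ≤ 1} | |A ∩ [0,x]| - x|A| |` for a finite set `A` of reals. -/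
noncomputable def dstarSet (A : Finset ℝ) : ℝ :=
  ⨆ x : Set.Icc (0 : ℝ) 1,
    |(((@Finset.filter ℝ (fun a => a ∈ Set.Icc (0 : ℝ) (x : ℝ))
        (Classical.decPred _) A).card : ℝ)) - (x : ℝ) * (A.card : ℝ)|

/-- Iterated Gauss map: `gaussIter α 0 = α`, `gaussIter α (i+1) = 1/{gaussIter α i}`.
For irrational `α`, the partial quotients of the continued fraction `α = [a₀; a₁, a₂, …]`
are given by `aᵢ = ⌊gaussIter α i⌋`. -/
noncomputable def gaussIter (α : ℝ) : ℕ → ℝ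
  | 0 => α
  | n + 1 => 1 / Int.fract (gaussIter α n)

/-- Auxiliary for continuants (operating on the reversed list):
`contRev [] = 1`, `contRev [a] = a`, `contRev (a :: b :: l) = a * contRev (b :: l) + contRev l`. -/
def contRev : List ℕ → ℕ
  | [] => 1
  | [a] => a
  | a :: b :: l => a * contRev (b :: l) + contRev l

/-- The continuant `K(a₁,…,a_m)`: `K() = 1`, `K(a₁) = a₁`,
`K(a₁,…,a_j) = a_j·K(a₁,…,a_{j−1}) + K(a₁,…,a_{j−2})`. -/
def continuant (l : List ℕ) : ℕ := contRev l.reverse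

/-- `B_σ(k) = |{1 ≤ q ≤ k : σ(q) ≤ σ(k)}|` for a permutation `σ` of `[n]`
(realized as `Fin n`, zero-indexed). -/
def Bperm (n : ℕ) (σ : Equiv.Perm (Fin n)) (k : Fin n) : ℕ :=
  (Finset.univ.filter (fun q : Fin n => q ≤ k ∧ σ q ≤ σ k)).card

/-- `B_α(k) = |{1 ≤ q ≤ k : {qα} ≤ {kα}}|`. -/
noncomputable def Bfrac (α : ℝ) (k : ℕ) : ℕ :=
  (@Finset.filter ℕ (fun q => Int.fract (α * q) ≤ Int.fract (α * k))
    (Classical.decPred _) (Finset.Icc 1 k)).card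

lemma frac_inj (α : ℝ) (hα : Irrational α) :
    Function.Injective (fun q : ℕ => Int.fract (α * q)) := by
  intro q q' h
  by_contra hne
  simp only [Int.fract_eq_fract] at h
  obtain ⟨z, hz⟩ := h
  have hq : (q : ℝ) - (q' : ℝ) ≠ 0 := by
    intro h0
    exact hne (Nat.cast_injective (by linarith : (q:ℝ) = q'))
  have hα' : α = (z : ℝ) / ((q : ℤ) - (q' : ℤ) : ℤ) := by
    push_cast
    field_simp
    linarith [hz]
  exact (irrational_iff_ne_rational α).mp hα z ((q : ℤ) - q') (by omega) hα'

lemma le_dstarSet (A : Finset ℝ) {x : ℝ} (hx : x ∈ Set.Icc (0:ℝ) 1) :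
    |(((@Finset.filter ℝ (fun a => a ∈ Set.Icc (0 : ℝ) x)
        (Classical.decPred _) A).card : ℝ)) - x * (A.card : ℝ)| ≤ dstarSet A := by
  have hb : BddAbove (Set.range fun y : Set.Icc (0:ℝ) 1 =>
      |(((@Finset.filter ℝ (fun a => a ∈ Set.Icc (0 : ℝ) (y : ℝ))
          (Classical.decPred _) A).card : ℝ)) - (y : ℝ) * (A.card : ℝ)|) := by
    refine ⟨2 * A.card, ?_⟩
    rintro r ⟨y, rfl⟩
    have h1 : ((@Finset.filter ℝ (fun a => a ∈ Set.Icc (0 : ℝ) (y : ℝ))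
          (Classical.decPred _) A).card : ℝ) ≤ A.card := by
      exact_mod_cast Finset.card_filter_le _ _
    have h2 : |(y : ℝ) * (A.card : ℝ)| ≤ A.card := by
      rw [abs_mul, abs_of_nonneg y.2.1, Nat.abs_cast]
      nlinarith [y.2.1, y.2.2, Nat.cast_nonneg (α := ℝ) A.card]
    have h3 : (0:ℝ) ≤ ((@Finset.filter ℝ (fun a => a ∈ Set.Icc (0 : ℝ) (y : ℝ))
          (Classical.decPred _) A).card : ℝ) := Nat.cast_nonneg _
    calc |_ - _| ≤ |(_ : ℝ)| + |(y : ℝ) * (A.card : ℝ)| := abs_sub _ _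
      _ ≤ A.card + A.card := by rw [abs_of_nonneg h3]; exact add_le_add h1 h2
      _ = 2 * A.card := by ring
  exact le_ciSup hb (⟨x, hx⟩ : Set.Icc (0:ℝ) 1)

lemma sos_le_iff (α : ℝ) (hα : Irrational α) (n : ℕ) {q q0 : ℕ}
    (hq : q ∈ Finset.Icc 1 n) (hq0 : q0 ∈ Finset.Icc 1 n) :
    sos α n q ≤ sos α n q0 ↔ Int.fract (α * q) ≤ Int.fract (α * q0) := by
  classical
  constructor
  · intro h
    by_contra hlt
    push_neg at hlt
    have hss : sos α n q0 < sos α n q := by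
      apply Finset.card_lt_card
      constructor
      · intro a ha
        rw [Finset.mem_filter] at ha ⊢
        exact ⟨ha.1, ha.2.trans hlt.le⟩
      · intro hsub
        have hqmem : q ∈ (@Finset.filter ℕ (fun s => Int.fract (α * s) ≤ Int.fract (α * q))
            (Classical.decPred _) (Finset.Icc 1 n)) := by
          rw [Finset.mem_filter]; exact ⟨hq, le_rfl⟩
        have := hsub hqmem
        rw [Finset.mem_filter] at this
        exact absurd this.2 (not_le.mpr hlt)
    omega
  · intro h
    apply Finset.card_le_card
    intro a ha
    rw [Finset.mem_filter] at ha ⊢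
    exact ⟨ha.1, ha.2.trans h⟩

lemma sos_mem (α : ℝ) (n : ℕ) {q : ℕ} (hq : q ∈ Finset.Icc 1 n) :
    sos α n q ∈ Finset.Icc 1 n := by
  rw [Finset.mem_Icc]
  constructor
  · have : q ∈ (@Finset.filter ℕ (fun s => Int.fract (α * s) ≤ Int.fract (α * q))
        (Classical.decPred _) (Finset.Icc 1 n)) := by
      rw [Finset.mem_filter]; exact ⟨hq, le_rfl⟩
    exact Finset.card_pos.mpr ⟨q, this⟩
  · calc sos α n q ≤ (Finset.Icc 1 n).card := Finset.card_filter_le _ _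
      _ = n := by rw [Nat.card_Icc]; omega

lemma sos_injOn (α : ℝ) (hα : Irrational α) (n : ℕ) {q q' : ℕ}
    (hq : q ∈ Finset.Icc 1 n) (hq' : q' ∈ Finset.Icc 1 n) (h : sos α n q = sos α n q') :
    q = q' := by
  have h1 := (sos_le_iff α hα n hq hq').mp h.le
  have h2 := (sos_le_iff α hα n hq' hq).mp h.ge
  exact frac_inj α hα (le_antisymm h1 h2)

/-- For irrational `α` and `n ≥ 1`:
`max_{s,t ∈ [n]} | |β_α([s]) ∩ [t]| − s·t/n | ≤ 2 · max_{1 ≤ s ≤ n} d*(A_s(α))`. -/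
theorem stmt_12 (α : ℝ) (hα : Irrational α) (n : ℕ) (hn : 1 ≤ n) :
    ∀ s ∈ Finset.Icc 1 n, ∀ t ∈ Finset.Icc 1 n,
      |((((Finset.Icc 1 s).image (sos α n)) ∩ Finset.Icc 1 t).card : ℝ)
          - (s : ℝ) * (t : ℝ) / (n : ℝ)|
        ≤ 2 * (Finset.Icc 1 n).sup' (Finset.nonempty_Icc.mpr hn)
            (fun s' => dstarSet (fracSet α s')) := by
  classical
  intro s hs t ht
  rw [Finset.mem_Icc] at hs ht
  have hnmem : n ∈ Finset.Icc 1 n := by rw [Finset.mem_Icc]; omega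
  have hsmem : s ∈ Finset.Icc 1 n := by rw [Finset.mem_Icc]; omega
  have hsub : Finset.Icc 1 s ⊆ Finset.Icc 1 n := Finset.Icc_subset_Icc_right hs.2
  -- find q0 with sos α n q0 = t
  obtain ⟨q0, hq0, hq0t⟩ : ∃ q0, ∃ _ : q0 ∈ Finset.Icc 1 n, t = sos α n q0 :=
    Finset.surj_on_of_inj_on_of_card_le (fun q _ => sos α n q)
      (fun q hq => sos_mem α n hq)
      (fun q q' hq hq' h => sos_injOn α hα n hq hq' h) le_rfl t
      (by rw [Finset.mem_Icc]; omega)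
  set x : ℝ := Int.fract (α * q0) with hxdef
  have hx01 : x ∈ Set.Icc (0:ℝ) 1 := ⟨Int.fract_nonneg _, (Int.fract_lt_one _).le⟩
  -- counting lemma
  have hcount : ∀ m : ℕ,
      ((@Finset.filter ℝ (fun a => a ∈ Set.Icc (0 : ℝ) x)
        (Classical.decPred _) (fracSet α m)).card : ℝ)
      = (((Finset.Icc 1 m).filter (fun q : ℕ => Int.fract (α * q) ≤ x)).card : ℝ) := by
    intro m
    congr 1
    rw [show (fracSet α m) = (Finset.Icc 1 m).image (fun q : ℕ => Int.fract (α * q)) from rfl,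
      Finset.filter_congr_decidable, Finset.filter_image,
      Finset.card_image_of_injOn (fun a _ b _ h => frac_inj α hα h)]
    congr 1
    ext q
    simp [Set.mem_Icc, Int.fract_nonneg]
  have hcardfrac : ∀ m : ℕ, (fracSet α m).card = m := by
    intro m
    rw [show (fracSet α m) = (Finset.Icc 1 m).image (fun q : ℕ => Int.fract (α * q)) from rfl,
      Finset.card_image_of_injOn (fun a _ b _ h => frac_inj α hα h), Nat.card_Icc]
    omega
  -- cardA identity
  have hA : ((((Finset.Icc 1 s).image (sos α n)) ∩ Finset.Icc 1 t).card : ℕ)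
      = ((Finset.Icc 1 s).filter (fun q : ℕ => Int.fract (α * q) ≤ x)).card := by
    rw [← Finset.filter_mem_eq_inter, Finset.filter_image,
      Finset.card_image_of_injOn
        (fun a ha b hb h => sos_injOn α hα n (hsub (Finset.mem_filter.mp ha).1)
          (hsub (Finset.mem_filter.mp hb).1) h)]
    congr 1
    ext q
    simp only [Finset.mem_filter, Finset.mem_Icc]
    constructor
    · rintro ⟨hqs, h1, h2⟩
      have hqn : q ∈ Finset.Icc 1 n := hsub (Finset.mem_Icc.mpr hqs)
      exact ⟨hqs, (sos_le_iff α hα n hqn hq0).mp (hq0t ▸ h2)⟩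
    · rintro ⟨hqs, h⟩
      have hqn : q ∈ Finset.Icc 1 n := hsub (Finset.mem_Icc.mpr hqs)
      have h1 : 1 ≤ sos α n q := (Finset.mem_Icc.mp (sos_mem α n hqn)).1
      exact ⟨hqs, h1, hq0t ▸ ((sos_le_iff α hα n hqn hq0).mpr h)⟩
  -- t identity
  have hT : (t : ℕ) = ((Finset.Icc 1 n).filter (fun q : ℕ => Int.fract (α * q) ≤ x)).card := by
    rw [hq0t]
    unfold sos
    rw [Finset.filter_congr_decidable]
  -- discrepancy bounds
  set D := (Finset.Icc 1 n).sup' (Finset.nonempty_Icc.mpr hn)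
      (fun s' => dstarSet (fracSet α s')) with hD
  have hDs : dstarSet (fracSet α s) ≤ D := by
    rw [hD]; exact Finset.le_sup' (fun s' => dstarSet (fracSet α s')) hsmem
  have hDn : dstarSet (fracSet α n) ≤ D := by
    rw [hD]; exact Finset.le_sup' (fun s' => dstarSet (fracSet α s')) hnmem
  have h1 : |(((Finset.Icc 1 s).filter (fun q : ℕ => Int.fract (α * q) ≤ x)).card : ℝ)
      - x * s| ≤ D := by
    have := le_dstarSet (fracSet α s) hx01
    rw [hcount s, hcardfrac s] at this
    exact this.trans hDs
  have h2 : |(t : ℝ) - x * n| ≤ D := by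
    have := le_dstarSet (fracSet α n) hx01
    rw [hcount n, hcardfrac n] at this
    rw [hT]
    exact this.trans hDn
  have hn0 : (0:ℝ) < n := by exact_mod_cast hn
  have hDnn : (0:ℝ) ≤ D := le_trans (abs_nonneg _) h2
  rw [hA]
  have key : |x * s - (s:ℝ) * t / n| ≤ D := by
    have heq : x * s - (s:ℝ) * t / n = ((s:ℝ)/n) * (x * n - t) := by
      field_simp
    rw [heq, abs_mul, abs_sub_comm (x * n) (t:ℝ)] at *
    have hsn : |(s:ℝ)/n| ≤ 1 := by
      rw [abs_of_nonneg (by positivity)]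
      rw [div_le_one hn0]
      exact_mod_cast hs.2
    calc |(s:ℝ)/n| * |(t:ℝ) - x * n| ≤ 1 * D :=
          mul_le_mul hsn h2 (abs_nonneg _) zero_le_one
      _ = D := one_mul D
  calc |(((Finset.Icc 1 s).filter (fun q : ℕ => Int.fract (α * q) ≤ x)).card : ℝ)
        - (s:ℝ) * t / n|
      ≤ |(((Finset.Icc 1 s).filter (fun q : ℕ => Int.fract (α * q) ≤ x)).card : ℝ)
        - x * s| + |x * s - (s:ℝ) * t / n| := abs_sub_le _ _ _
    _ ≤ D + D := add_le_add h1 key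
    _ = 2 * D := by ring
end

section
/- For each B ≥ 1 there exists a constant C (depending only on B) with the following property: if a₁, …, a_m is a finite sequence of positive integers satisfying (1/j)·Σ_{i=1}^j a_i ≤ B for all 1 ≤ j ≤ m, and n = K(a₁, …, a_m) is its continuant (the denominator of the finite continued fraction [0; a₁, …, a_m] in lowest terms), then min_{k ∈ Z_n^×} D(ψ_k) ≤ C·log n. -/
open Finset

def Gcnt (n k c L M : ℕ) : ℕ := ((range L).filter (fun i => (k*i + c) % n < M)).card

/-- recursive error bound along Euclid -/
def errN : ℕ → ℕ → ℕ
  | n, 0 => n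
  | n, 1 => n
  | n, (k+2) => 6*(n/(k+2)) + 12 + errN (k+2) (n % (k+2))
  termination_by n k => k
  decreasing_by exact Nat.mod_lt _ (by omega)

lemma errN_of_le_one {n k : ℕ} (h : k ≤ 1) : errN n k = n := by
  interval_cases k <;> simp [errN]

lemma errN_of_two_le {n k : ℕ} (h : 2 ≤ k) : errN n k = 6*(n/k) + 12 + errN k (n % k) := by
  obtain ⟨j, rfl⟩ : ∃ j, k = j + 2 := ⟨k - 2, by omega⟩
  simp [errN]

-- ceiling division helpers
lemma cdiv_le_iff {k : ℕ} (hk : 0 < k) (x i : ℕ) : (x + (k - 1)) / k ≤ i ↔ x ≤ k * i := by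
  rw [Nat.div_le_iff_le_mul_add_pred hk]
  omega

lemma lt_cdiv_iff {k : ℕ} (hk : 0 < k) (y i : ℕ) : i < (y + (k - 1)) / k ↔ k * i < y := by
  rw [← not_le, ← not_le, cdiv_le_iff hk]

lemma le_cdiv_mul {k : ℕ} (hk : 0 < k) (x : ℕ) : x ≤ k * ((x + (k - 1)) / k) :=
  (cdiv_le_iff hk x _).1 le_rfl

lemma cdiv_mul_add {k : ℕ} (hk : 0 < k) (u v : ℕ) :
    (k*u + v + (k - 1)) / k = u + (v + (k - 1)) / k := by
  rw [add_assoc, Nat.mul_add_div hk]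

lemma cdiv_add_le {k : ℕ} (hk : 0 < k) (x y : ℕ) :
    (x + y + (k - 1)) / k ≤ (x + (k - 1)) / k + (y + (k - 1)) / k := by
  rw [cdiv_le_iff hk, mul_add]
  exact add_le_add (le_cdiv_mul hk x) (le_cdiv_mul hk y)

lemma cdiv_le_of_le {k : ℕ} (x y : ℕ) (h : x ≤ y) : (x + (k-1))/k ≤ (y + (k-1))/k :=
  Nat.div_le_div_right (by omega)

lemma divmod_iff {n M x q : ℕ} (hn : 0 < n) (hM : M ≤ n) :
    (x / n = q ∧ x % n < M) ↔ (n*q ≤ x ∧ x < n*q + M) := by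
  constructor
  · rintro ⟨hq, hm⟩
    have h := Nat.div_add_mod x n
    rw [hq] at h
    omega
  · rintro ⟨h1, h2⟩
    have hq : x / n = q := Nat.div_eq_of_lt_le (by rw [mul_comm]; omega)
      (by rw [add_mul, one_mul, mul_comm]; omega)
    have h := Nat.div_add_mod x n
    rw [hq] at h
    exact ⟨hq, by omega⟩

/-- mod complement: if (a + x) % k = 0 then a % k = (k - x % k) % k -/
lemma mod_compl {k a x : ℕ} (hk : 0 < k) (h : (a + x) % k = 0) :
    a % k = (k - x % k) % k := by
  have h1 : (a % k + x % k) % k = 0 := by rwa [Nat.add_mod] at h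
  have h2 : a % k < k := Nat.mod_lt _ hk
  have h3 : x % k < k := Nat.mod_lt _ hk
  rcases Nat.lt_or_ge (a % k + x % k) k with h4 | h4
  · rw [Nat.mod_eq_of_lt h4] at h1
    have hx : x % k = 0 := by omega
    have ha : a % k = 0 := by omega
    simp [hx, ha, Nat.mod_self]
  · have h5 : a % k + x % k - k < k := by omega
    have h6 : (a % k + x % k) % k = a % k + x % k - k := by
      rw [Nat.mod_eq_sub_mod h4, Nat.mod_eq_of_lt h5]
    have h7 : a % k + x % k = k := by omega
    have h8 : k - x % k < k := by omega
    rw [Nat.mod_eq_of_lt h8]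
    omega

lemma key_mod (n m c i : ℕ) : (m*i + c) % n = ((m % n)*i + c % n) % n :=
  (((Nat.mod_modEq m n).mul_right i).add (Nat.mod_modEq c n)).symm

lemma Gcnt_mod (n k c L M : ℕ) : Gcnt n k c L M = Gcnt n (k % n) (c % n) L M := by
  unfold Gcnt
  congr 1
  apply filter_congr
  intro i _
  simp only [key_mod n k c i]

lemma Gcnt_le (n k c L M : ℕ) : Gcnt n k c L M ≤ L := by
  simpa [Gcnt] using (Finset.card_filter_le (range L) _)

lemma Gcnt_triv (n k c L M : ℕ) (hn : 0 < n) (hL : L ≤ n) (hM : M ≤ n) :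
    |(Gcnt n k c L M : ℝ) - L * M / n| ≤ n := by
  have hnR : (0:ℝ) < n := by exact_mod_cast hn
  have h1 : (Gcnt n k c L M : ℝ) ≤ n := by
    have := Gcnt_le n k c L M
    have : Gcnt n k c L M ≤ n := le_trans this hL
    exact_mod_cast this
  have h2 : (0:ℝ) ≤ (L:ℝ) * M / n := by positivity
  have h3 : (L:ℝ) * M / n ≤ n := by
    rw [div_le_iff₀ hnR]
    have : (L:ℝ) ≤ n := by exact_mod_cast hL
    have hM' : (M:ℝ) ≤ n := by exact_mod_cast hM
    nlinarith
  have h4 : (0:ℝ) ≤ (Gcnt n k c L M : ℝ) := by positivity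
  rw [abs_le]; constructor <;> nlinarith

lemma Gcnt_reflect {k r : ℕ} (hr : 0 < r) (hrk : r ≤ k) (c K s : ℕ) :
    Gcnt k (k - r) c K s = Gcnt k r (c + r*(k*K + 1 - K)) K s := by
  have hk : 0 < k := lt_of_lt_of_le hr hrk
  have hKkK : K ≤ k*K := Nat.le_mul_of_pos_left K hk
  have claim : ∀ j, j < K →
      ((k - r)*j + c) % k = (r*(K - 1 - j) + (c + r*(k*K + 1 - K))) % k := by
    intro j hj
    have hjkK : j ≤ k*K := by omega
    have e2 : r*(K - 1 - j) + (c + r*(k*K + 1 - K)) = r*(k*K - j) + c := by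
      have : (K - 1 - j) + (k*K + 1 - K) = k*K - j := by omega
      rw [← this, Nat.mul_add]
      ring
    rw [e2]
    have e1 : (k - r)*j + c + r*j = k*j + c := by
      have : (k - r)*j + r*j = k*j := by
        rw [← Nat.add_mul]
        congr 1
        omega
      omega
    have e3 : r*(k*K - j) + c + r*j = r*(k*K) + c := by
      have : r*(k*K - j) + r*j = r*(k*K) := by
        rw [← Nat.mul_add]
        congr 1
        omega
      omega
    have hmod : k*j + c ≡ r*(k*K) + c [MOD k] := by
      refine Nat.ModEq.add_right c ?_
      have d1 : k*j ≡ 0 [MOD k] := (Nat.modEq_zero_iff_dvd).2 ⟨j, rfl⟩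
      have d2 : r*(k*K) ≡ 0 [MOD k] := (Nat.modEq_zero_iff_dvd).2 ⟨r*K, by ring⟩
      exact d1.trans d2.symm
    have hmod2 : (k - r)*j + c + r*j ≡ r*(k*K - j) + c + r*j [MOD k] := by
      rw [e1, e3]; exact hmod
    exact Nat.ModEq.add_right_cancel (Nat.ModEq.refl (r*j)) hmod2
  unfold Gcnt
  apply Finset.card_nbij' (fun j => K - 1 - j) (fun j => K - 1 - j)
  · intro j hj
    simp only [mem_coe, mem_filter, mem_range] at hj ⊢
    refine ⟨by omega, ?_⟩
    rw [← claim j hj.1]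
    exact hj.2
  · intro j hj
    simp only [mem_coe, mem_filter, mem_range] at hj ⊢
    refine ⟨by omega, ?_⟩
    have h2 := claim (K - 1 - j) (by omega)
    rw [show K - 1 - (K - 1 - j) = j by omega] at h2
    rw [h2]
    exact hj.2
  · intro a ha
    simp only [mem_coe, mem_filter, mem_range] at ha
    show K - 1 - (K - 1 - a) = a
    omega
  · intro a ha
    simp only [mem_coe, mem_filter, mem_range] at ha
    show K - 1 - (K - 1 - a) = a
    omega

lemma Gcnt_reindex (k mm c K s : ℕ) :
    ∑ q ∈ Icc 1 K, (if (c + q*mm) % k < s then 1 else 0) = Gcnt k mm (mm + c) K s := by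
  rw [Gcnt, Finset.card_filter]
  apply Finset.sum_nbij' (fun q => q - 1) (fun j => j + 1)
  · intro q hq; simp only [mem_Icc, mem_range] at hq ⊢; omega
  · intro j hj; simp only [mem_Icc, mem_range] at hj ⊢; omega
  · intro q hq; simp only [mem_Icc] at hq; omega
  · intro j _; omega
  · intro q hq
    simp only [mem_Icc] at hq
    have : c + q*mm = mm*(q-1) + (mm + c) := by
      obtain ⟨j, rfl⟩ : ∃ j, q = j + 1 := ⟨q - 1, by omega⟩
      simp only [Nat.add_sub_cancel]
      ring
    rw [this]

lemma window_card (k u v D s : ℕ) (hk : 0 < k) (hvk : v < k) (hsk : s < k) :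
    (u + D + (v + s + (k-1))/k) - (u + (v + (k-1))/k)
      = D + if (k - v) % k < s then 1 else 0 := by
  rcases Nat.eq_zero_or_pos v with hv0 | hv1
  · subst hv0
    have e1 : (0 + (k-1))/k = 0 := Nat.div_eq_of_lt (by omega)
    have e3 : (k - 0) % k = 0 := by simp
    rw [e1, e3]
    rcases Nat.eq_zero_or_pos s with hs0 | hs1
    · subst hs0
      have e2 : (0 + 0 + (k-1))/k = 0 := Nat.div_eq_of_lt (by omega)
      rw [e2]
      simp
    · have e2 : (0 + s + (k-1))/k = 1 := Nat.div_eq_of_lt_le (by omega) (by omega)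
      rw [e2, if_pos hs1]
      omega
  · have e1 : (v + (k-1))/k = 1 := Nat.div_eq_of_lt_le (by omega) (by omega)
    have e3 : (k - v) % k = k - v := Nat.mod_eq_of_lt (by omega)
    rw [e1, e3]
    rcases le_or_gt (v + s) k with hvs | hvs
    · have e2 : (v + s + (k-1))/k = 1 := Nat.div_eq_of_lt_le (by omega) (by omega)
      rw [e2, if_neg (by omega)]
      omega
    · have e2 : (v + s + (k-1))/k = 2 := Nat.div_eq_of_lt_le (by omega) (by omega)
      rw [e2, if_pos (by omega)]
      omega


lemma Gcnt_bound : ∀ k n c L M : ℕ, 0 < n → k < n → Nat.Coprime n k → c < n → L ≤ n → M ≤ n →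
    |(Gcnt n k c L M : ℝ) - L * M / n| ≤ errN n k := by
  intro k
  induction k using Nat.strong_induction_on with
  | _ k IH =>
  intro n c L M hn hkn hcop hc hL hM
  rcases le_or_gt k 1 with hk1 | hk2
  · rw [errN_of_le_one hk1]; exact Gcnt_triv n k c L M hn hL hM
  -- main step, 2 ≤ k
  have hk : 0 < k := by omega
  set s := M % k with hs
  set D := M / k with hD
  have hsk : s < k := Nat.mod_lt _ hk
  have hMDs : k*D + s = M := Nat.div_add_mod M k
  have hDnk : D ≤ n / k := by rw [hD]; exact Nat.div_le_div_right hM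
  clear_value s D
  set K := (k*L + c - M) / n with hKdef
  have hKmul : n*K ≤ k*L + c - M := by rw [hKdef]; exact Nat.mul_div_le _ _
  have hKmod : k*L + c - M < n*K + n := by
    have h9 := Nat.div_add_mod (k*L + c - M) n
    have h8 := Nat.mod_lt (k*L + c - M) hn
    rw [← hKdef] at h9
    omega
  have hK0 : k*L + c < M → K = 0 := by
    intro h
    rw [hKdef, Nat.sub_eq_zero_of_le (le_of_lt h), Nat.zero_div]
  clear_value K
  have h6 : K ≤ k := by
    by_contra hcon
    push_neg at hcon
    have h10 : n*(k+1) ≤ n*K := Nat.mul_le_mul_left n (by omega)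
    have e : n*(k+1) = n*k + n := by ring
    have h8 : k*L ≤ k*n := Nat.mul_le_mul_left _ hL
    have hco : k*n = n*k := Nat.mul_comm k n
    omega
  set A : ℕ → ℕ := fun q =>
    ((range L).filter (fun i => (k*i + c)/n = q ∧ (k*i + c) % n < M)).card with hA
  -- fiberwise decomposition
  have h1 : Gcnt n k c L M = ∑ q ∈ range (k+1), A q := by
    rw [Gcnt]
    rw [Finset.card_eq_sum_card_fiberwise
      (f := fun i => (k*i+c)/n) (t := range (k+1)) ?memb]
    case memb =>
      intro i hi
      simp only [mem_coe, mem_filter, mem_range] at hi ⊢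
      rw [Nat.div_lt_iff_lt_mul hn]
      have h2 : k*i ≤ k*(n-1) := Nat.mul_le_mul_left _ (by omega)
      have e : k*n = k*(n-1) + k := by
        have h9 : k*((n-1)+1) = k*(n-1) + k := by rw [Nat.mul_add, Nat.mul_one]
        rw [show (n-1)+1 = n from by omega] at h9
        omega
      have e2 : (k+1)*n = k*n + n := by ring
      omega
    rw [hA]
    apply sum_congr rfl
    intro q _
    rw [filter_filter]
    congr 1
    apply filter_congr
    intro i _
    tauto
  clear_value A
  -- interior formula
  have h2 : ∀ q, 1 ≤ q → q ≤ K →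
      A q = D + (if (c + q*(k*n - n)) % k < s then 1 else 0) := by
    intro q hq1 hqK
    have hnnq : n ≤ n*q := Nat.le_mul_of_pos_right n hq1
    have hcqn : c < n*q := lt_of_lt_of_le hc hnnq
    have hwin : n*q + M ≤ k*L + c := by
      have f2 : n*q ≤ n*K := Nat.mul_le_mul_left n hqK
      have f3 : K = 0 ∨ M ≤ k*L + c := by
        rcases le_or_gt M (k*L + c) with h|h
        · right; exact h
        · left; exact hK0 h
      omega
    set X := n*q - c with hX
    set v := X % k with hv
    set u := X / k with hu
    have hXuv : k*u + v = X := Nat.div_add_mod X k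
    have hvk : v < k := Nat.mod_lt _ hk
    clear_value v u
    clear_value X
    set lo := (X + (k-1))/k with hlo
    set hi := (X + M + (k-1))/k with hhi
    have hloval : lo = u + (v + (k-1))/k := by
      rw [hlo, show X = k*u + v from hXuv.symm, cdiv_mul_add hk]
    have hhival : hi = u + D + (v + s + (k-1))/k := by
      have e : X + M = k*(u+D) + (v+s) := by
        have h9 : k*(u+D) = k*u + k*D := by ring
        omega
      rw [hhi, e, cdiv_mul_add hk]
    have hhiL : hi ≤ L := by
      rw [hhi, cdiv_le_iff hk]
      omega
    have hloiff : ∀ i : ℕ, (lo ≤ i ↔ X ≤ k*i) := by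
      intro i; rw [hlo]; exact cdiv_le_iff hk X i
    have hhiiff : ∀ i : ℕ, (i < hi ↔ k*i < X + M) := by
      intro i; rw [hhi]; exact lt_cdiv_iff hk _ i
    clear_value lo hi
    have hset : (range L).filter (fun i => (k*i + c)/n = q ∧ (k*i + c) % n < M)
        = Ico lo hi := by
      ext i
      simp only [mem_filter, mem_range, mem_Ico]
      rw [divmod_iff hn hM]
      constructor
      · rintro ⟨hiL, ha, hb⟩
        constructor
        · rw [hloiff]; omega
        · rw [hhiiff]; omega
      · rintro ⟨ha, hb⟩
        have hx : X ≤ k*i := (hloiff i).1 ha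
        have hy : k*i < X + M := (hhiiff i).1 hb
        exact ⟨lt_of_lt_of_le hb hhiL, by omega, by omega⟩
    have hcard : A q = hi - lo := by
      rw [hA]; simp only; rw [hset, Nat.card_Ico]
    have hr : (c + q*(k*n - n)) % k = (k - v) % k := by
      rw [hv]
      apply mod_compl hk
      have hkn' : n ≤ k*n := Nat.le_mul_of_pos_left n hk
      have e1 : q*(k*n - n) + q*n = q*(k*n) := by
        rw [← Nat.mul_add]
        congr 1
        omega
      have hqn : n*q = q*n := Nat.mul_comm n q
      have e2 : (c + q*(k*n - n)) + X = q*(k*n) := by omega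
      rw [e2, show q*(k*n) = k*(q*n) from by ring]
      exact Nat.mul_mod_right k _
    rw [hcard, hloval, hhival, hr]
    exact window_card k u v D s hk hvk hsk
  -- bound on partial windows
  have hDb : (M + (k-1))/k ≤ D + 1 := by
    have e : (k*D + s + (k-1))/k = D + (s + (k-1))/k := cdiv_mul_add hk D s
    have e2 : (s + (k-1))/k ≤ 1 := by
      rw [Nat.div_le_iff_le_mul_add_pred hk]
      omega
    rw [show M = k*D + s from hMDs.symm]
    omega
  have h3 : A 0 ≤ D + 1 := by
    have hsub : (range L).filter (fun i => (k*i + c)/n = 0 ∧ (k*i + c) % n < M)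
        ⊆ range ((M + (k-1))/k) := by
      intro i hi
      simp only [mem_filter, mem_range] at hi ⊢
      obtain ⟨hiL, ha, hb⟩ := hi
      have h4 := (divmod_iff hn hM).1 ⟨ha, hb⟩
      rw [lt_cdiv_iff hk]
      omega
    have := Finset.card_le_card hsub
    rw [Finset.card_range] at this
    rw [hA]
    simp only
    omega
  have h4 : A (K+1) ≤ D + 1 := by
    have hnnq : n ≤ n*(K+1) := Nat.le_mul_of_pos_right n (Nat.succ_pos K)
    have hcqn : c < n*(K+1) := lt_of_lt_of_le hc hnnq
    set X := n*(K+1) - c with hX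
    clear_value X
    set lo := (X + (k-1))/k with hlo
    set hi := (X + M + (k-1))/k with hhi
    have hcb : hi ≤ lo + (M + (k-1))/k := by
      rw [hhi, hlo]
      exact cdiv_add_le hk X M
    have hloiff : ∀ i : ℕ, (lo ≤ i ↔ X ≤ k*i) := by
      intro i; rw [hlo]; exact cdiv_le_iff hk X i
    have hhiiff : ∀ i : ℕ, (i < hi ↔ k*i < X + M) := by
      intro i; rw [hhi]; exact lt_cdiv_iff hk _ i
    clear_value lo hi
    have hsub : (range L).filter
        (fun i => (k*i + c)/n = (K+1) ∧ (k*i + c) % n < M) ⊆ Ico lo hi := by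
      intro i hi2
      simp only [mem_filter, mem_range, mem_Ico] at hi2 ⊢
      obtain ⟨hiL, ha, hb⟩ := hi2
      have h5 := (divmod_iff hn hM).1 ⟨ha, hb⟩
      constructor
      · rw [hloiff]; omega
      · rw [hhiiff]; omega
    have h7 := Finset.card_le_card hsub
    rw [Nat.card_Ico] at h7
    rw [hA]
    simp only
    omega
  have h5 : ∀ q, K+2 ≤ q → A q = 0 := by
    intro q hq
    have hub : k*L + c < n*q := by
      have f0 : n*(K+2) ≤ n*q := Nat.mul_le_mul_left n hq
      have f1 : n*(K+2) = n*K + 2*n := by ring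
      omega
    rw [hA]
    simp only [Finset.card_eq_zero]
    rw [Finset.filter_eq_empty_iff]
    intro i hi
    simp only [mem_range] at hi
    rintro ⟨ha, hb⟩
    have h7 := (divmod_iff hn hM).1 ⟨ha, hb⟩
    have h8 : k*i < k*L := (Nat.mul_lt_mul_left hk).2 hi
    omega
  -- sum decomposition bounds
  set GR0 : ℕ := ∑ q ∈ Icc 1 K, (if (c + q*(k*n - n)) % k < s then 1 else 0) with hGR0
  have hIccsub : Icc 1 K ⊆ range (k+1) := by
    intro q hq
    simp only [mem_Icc, mem_range] at hq ⊢
    omega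
  have hinterior : ∑ q ∈ Icc 1 K, A q = K*D + GR0 := by
    rw [Finset.sum_congr rfl (fun q hq => h2 q (by simp at hq; omega) (by simp at hq; omega))]
    rw [Finset.sum_add_distrib, Finset.sum_const, Nat.card_Icc]
    rw [hGR0]
    simp [mul_comm]
  clear_value GR0
  have hlow : K*D + GR0 ≤ Gcnt n k c L M := by
    rw [h1, ← hinterior]
    exact Finset.sum_le_sum_of_subset hIccsub
  have hhigh : Gcnt n k c L M ≤ K*D + GR0 + (A 0 + A (K+1)) := by
    rw [h1, ← hinterior, ← Finset.sum_sdiff hIccsub]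
    have hb : ∑ q ∈ range (k+1) \ Icc 1 K, A q ≤ A 0 + A (K+1) := by
      have h9 : ∑ q ∈ range (k+1) \ Icc 1 K, A q ≤ ∑ q ∈ ({0, K+1} : Finset ℕ), A q := by
        apply Finset.sum_le_sum_of_ne_zero
        intro q hq hAq
        simp only [mem_sdiff, mem_range, mem_Icc, not_and, not_le] at hq
        simp only [mem_insert, mem_singleton]
        by_contra hcon
        push_neg at hcon
        have : K + 2 ≤ q := by omega
        exact hAq (h5 q this)
      rwa [Finset.sum_pair (by omega : (0:ℕ) ≠ K+1)] at h9
    omega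
  -- identify GR0 with a Gcnt and transform
  have hr0 : 0 < n % k := by
    rcases Nat.eq_zero_or_pos (n % k) with h|h
    · exfalso
      have hdvd : k ∣ n := Nat.dvd_of_mod_eq_zero h
      have h9 : k ∣ Nat.gcd n k := Nat.dvd_gcd hdvd dvd_rfl
      rw [hcop] at h9
      have := Nat.le_of_dvd one_pos h9
      omega
    · exact h
  set r := n % k with hrdef
  have hrk : r < k := Nat.mod_lt _ hk
  have hcop2 : Nat.Coprime k r := by
    have e1 : Nat.gcd k n = Nat.gcd (n % k) k := Nat.gcd_rec k n
    have e2 : Nat.gcd k n = 1 := by rw [Nat.gcd_comm]; exact hcop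
    have e3 : Nat.gcd r k = 1 := by rw [hrdef, ← e1]; exact e2
    rw [Nat.Coprime, Nat.gcd_comm]
    exact e3
  have hmmmod : (k*n - n) % k = k - r := by
    have h7 : ((k*n - n) + n) % k = 0 := by
      have e : (k*n - n) + n = k*n := by
        have : n ≤ k*n := Nat.le_mul_of_pos_left n hk
        omega
      rw [e]
      exact Nat.mul_mod_right k n
    have h8 := mod_compl hk h7
    rw [h8, ← hrdef, Nat.mod_eq_of_lt (by omega)]
  clear_value r
  set c3 := (((((k*n - n) + c) % k) + r*(k*K + 1 - K)) % k) with hc3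
  have hGRtrans : GR0 = Gcnt k r c3 K s := by
    rw [hGR0, Gcnt_reindex k (k*n - n) c K s, Gcnt_mod k (k*n - n) ((k*n - n) + c) K s,
      hmmmod]
    rw [Gcnt_reflect hr0 (by omega) _ K s]
    rw [Gcnt_mod k r _ K s, Nat.mod_eq_of_lt hrk, hc3]
  have hc3k : c3 < k := by rw [hc3]; exact Nat.mod_lt _ hk
  clear_value c3
  have hIH := IH r hrk k c3 K s hk hrk hcop2 hc3k h6 (le_of_lt hsk)
  rw [← hGRtrans] at hIH
  -- real assembly
  have hnR : (0:ℝ) < n := by exact_mod_cast hn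
  have hkR : (0:ℝ) < k := by exact_mod_cast hk
  have hKb : |(K:ℝ) - k*L/n| ≤ 2 := by
    have f1 : n*K ≤ k*L + c := by omega
    have f2 : k*L + c < n*K + n + M := by omega
    have f1R : (n:ℝ)*K ≤ k*L + c := by exact_mod_cast f1
    have f2R : (k:ℝ)*L + c < n*K + n + M := by exact_mod_cast f2
    have hcR : (c:ℝ) < n := by exact_mod_cast hc
    have hMR : (M:ℝ) ≤ n := by exact_mod_cast hM
    set w := (k:ℝ)*L/n with hw
    have hwn : w * n = (k:ℝ)*L := div_mul_cancel₀ _ (ne_of_gt hnR)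
    have hc0 : (0:ℝ) ≤ c := Nat.cast_nonneg c
    rw [abs_le]
    constructor
    · have h9 : w * n < ((K:ℝ)+2) * n := by
        rw [add_mul]
        linarith [hwn, f2R, hMR, hc0]
      have h10 : w < (K:ℝ)+2 := lt_of_mul_lt_mul_right h9 hnR.le
      linarith
    · have h9 : (K:ℝ) * n < (w+2) * n := by
        rw [add_mul]
        linarith [hwn, f1R, hcR]
      have h10 : (K:ℝ) < w+2 := lt_of_mul_lt_mul_right h9 hnR.le
      linarith
  have hMk : (M:ℝ)/k ≤ D + 1 := by
    have h9 : (M:ℝ) = k*D + s := by exact_mod_cast hMDs.symm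
    have hskR : (s:ℝ) < k := by exact_mod_cast hsk
    rw [div_le_iff₀ hkR, h9, add_mul, one_mul]
    linarith [hskR]
  have hlowR : (K:ℝ)*D + GR0 ≤ Gcnt n k c L M := by exact_mod_cast hlow
  have hhighR : (Gcnt n k c L M : ℝ) ≤ K*D + GR0 + 2*(D+1) := by
    have : Gcnt n k c L M ≤ K*D + GR0 + 2*(D+1) := by omega
    exact_mod_cast this
  have t1 : |(Gcnt n k c L M : ℝ) - ((K:ℝ)*D + GR0)| ≤ 2*(D+1) := by
    rw [abs_le]
    constructor <;> linarith [hlowR, hhighR]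
  have t3 : |((K:ℝ)*D + K*s/k) - L*M/n| ≤ 2*(D+1) := by
    have e1 : (K:ℝ)*D + K*s/k = (M/k)*K := by
      have e2 : (M:ℝ) = k*D + s := by exact_mod_cast hMDs.symm
      field_simp [e2]
      rw [e2]; ring
    have e3 : (L:ℝ)*M/n = (M/k)*(k*L/n) := by
      field_simp
    rw [e1, e3, ← mul_sub, abs_mul]
    have hM0 : (0:ℝ) ≤ M/k := by positivity
    have habs : |(M:ℝ)/k| = M/k := abs_of_nonneg hM0
    rw [habs]
    calc (M:ℝ)/k * |(K:ℝ) - k*L/n| ≤ (D+1) * 2 := by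
          apply mul_le_mul hMk hKb (abs_nonneg _) (by positivity)
    _ = 2*(D+1) := by ring
  have hfinal : |(Gcnt n k c L M : ℝ) - L*M/n| ≤ 2*(D+1) + errN k r + 2*(D+1) := by
    have hd : (Gcnt n k c L M : ℝ) - L*M/n
        = ((Gcnt n k c L M : ℝ) - ((K:ℝ)*D + GR0))
          + ((GR0:ℝ) - K*s/k)
          + (((K:ℝ)*D + K*s/k) - L*M/n) := by ring
    rw [hd]
    calc _ ≤ |((Gcnt n k c L M : ℝ) - ((K:ℝ)*D + GR0)) + ((GR0:ℝ) - K*s/k)|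
              + |((K:ℝ)*D + K*s/k) - L*M/n| := abs_add_le _ _
    _ ≤ |(Gcnt n k c L M : ℝ) - ((K:ℝ)*D + GR0)| + |(GR0:ℝ) - K*s/k|
              + |((K:ℝ)*D + K*s/k) - L*M/n| := by
          have := abs_add_le ((Gcnt n k c L M : ℝ) - ((K:ℝ)*D + GR0)) ((GR0:ℝ) - K*s/k)
          linarith
    _ ≤ 2*(D+1) + errN k r + 2*(D+1) := by
          have h9 : |(GR0:ℝ) - (K:ℝ)*s/k| ≤ errN k r := hIH
          linarith
  rw [errN_of_two_le hk2]
  have hcast : ((6*(n/k) + 12 + errN k (n % k) : ℕ) : ℝ)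
      = 6*((n/k : ℕ):ℝ) + 12 + (errN k r : ℝ) := by
    rw [hrdef]
    push_cast
    ring
  rw [hcast]
  have hDle : (D:ℝ) ≤ ((n/k : ℕ) : ℝ) := by exact_mod_cast hDnk
  linarith


lemma contRev_pos : ∀ l : List ℕ, (∀ a ∈ l, 1 ≤ a) → 1 ≤ contRev l
  | [], _ => le_refl 1
  | [a], h => by simpa [contRev] using h a (by simp)
  | a :: b :: t, h => by
      have h1 := contRev_pos (b :: t) (fun x hx => h x (by simp at hx ⊢; tauto))
      have ha : 1 ≤ a := h a (by simp)
      have h2 : a * contRev (b :: t) ≥ 1 := Nat.one_le_iff_ne_zero.2 (by positivity)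
      show 1 ≤ a * contRev (b :: t) + contRev t
      omega

lemma contRev_cons_ge : ∀ (b : ℕ) (t : List ℕ), (∀ a ∈ b :: t, 1 ≤ a) →
    contRev t ≤ contRev (b :: t)
  | b, [], h => by
      simpa [contRev] using h b (by simp)
  | b, c :: t', h => by
      have hb : 1 ≤ b := h b (by simp)
      have h1 : 1 ≤ contRev (c :: t') :=
        contRev_pos _ (fun x hx => h x (by simp at hx ⊢; tauto))
      show contRev (c :: t') ≤ b * contRev (c :: t') + contRev t'
      nlinarith

lemma contRev_cons_eq (a b : ℕ) (t : List ℕ) :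
    contRev (a :: b :: t) = a * contRev (b :: t) + contRev t := rfl

lemma contRev_tail_lt : ∀ (a : ℕ) (t : List ℕ), (∀ x ∈ a :: t, 1 ≤ x) →
    2 ≤ contRev (a :: t) → contRev t < contRev (a :: t)
  | a, [], h, h2 => by
      simp only [contRev] at h2 ⊢
      omega
  | a, b :: t', h, _ => by
      have ha : 1 ≤ a := h a (by simp)
      have h1 : 1 ≤ contRev t' :=
        contRev_pos _ (fun x hx => h x (by simp at hx ⊢; tauto))
      have h3 : 1 ≤ contRev (b :: t') :=
        contRev_pos _ (fun x hx => h x (by simp at hx ⊢; tauto))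
      rw [contRev_cons_eq]
      nlinarith

lemma contRev_coprime : ∀ l : List ℕ, (∀ a ∈ l, 1 ≤ a) →
    Nat.gcd (contRev l) (contRev l.tail) = 1
  | [], _ => by simp [contRev]
  | [a], _ => by simp [contRev]
  | a :: b :: t, h => by
      have ih := contRev_coprime (b :: t) (fun x hx => h x (by simp at hx ⊢; tauto))
      show Nat.gcd (a * contRev (b :: t) + contRev t) (contRev (b :: t)) = 1
      rw [Nat.add_comm, Nat.gcd_add_mul_right_left (contRev (b :: t)) (contRev t) a]
      rw [Nat.gcd_comm]
      exact ih

lemma two_pow_le_contRev : ∀ l : List ℕ, (∀ a ∈ l, 1 ≤ a) →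
    2^(l.length / 2) ≤ contRev l
  | [], _ => by simp [contRev]
  | [a], h => by simpa [contRev] using h a (by simp)
  | a :: b :: t, h => by
      have ih := two_pow_le_contRev t (fun x hx => h x (by simp at hx ⊢; tauto))
      have ha : 1 ≤ a := h a (by simp)
      have hge : contRev t ≤ contRev (b :: t) :=
        contRev_cons_ge b t (fun x hx => h x (by simp at hx ⊢; tauto))
      have hb : contRev (b :: t) ≤ a * contRev (b :: t) := Nat.le_mul_of_pos_left _ ha
      have hlen : (a :: b :: t).length / 2 = t.length / 2 + 1 := by
        simp only [List.length_cons]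
        omega
      rw [hlen, pow_succ, contRev_cons_eq]
      omega


lemma errN_le_sum : ∀ l : List ℕ, (∀ a ∈ l, 1 ≤ a) →
    errN (contRev l) (contRev l.tail) ≤ (l.map (fun a => 6*a + 12)).sum + 1
  | [], _ => by simp [contRev, errN_of_le_one]
  | [a], h => by
      simp only [List.tail_cons]
      rw [show contRev [a] = a from rfl, show contRev ([] : List ℕ) = 1 from rfl,
        errN_of_le_one le_rfl]
      simp only [List.map_cons, List.map_nil, List.sum_cons, List.sum_nil]
      omega
  | a :: b :: t, h => by
      have hall : ∀ x ∈ b :: t, 1 ≤ x := fun x hx => h x (by simp at hx ⊢; tauto)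
      have ih := errN_le_sum (b :: t) hall
      have ha : 1 ≤ a := h a (by simp)
      have hposk : 1 ≤ contRev (b :: t) := contRev_pos _ hall
      have hpost : 1 ≤ contRev t := contRev_pos _ (fun x hx => h x (by simp at hx ⊢; tauto))
      simp only [List.tail_cons]
      rcases le_or_gt (contRev (b :: t)) 1 with hk1 | hk2
      · -- contRev (b::t) = 1, so contRev t = 1 as well
        have hk : contRev (b :: t) = 1 := le_antisymm hk1 hposk
        have hge : contRev t ≤ contRev (b :: t) := contRev_cons_ge b t hall
        have ht1 : contRev t = 1 := by omega
        rw [errN_of_le_one (by omega : contRev (b :: t) ≤ 1)]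
        rw [contRev_cons_eq, hk, ht1]
        simp only [List.map_cons, List.sum_cons]
        omega
      · have hlt : contRev t < contRev (b :: t) :=
          contRev_tail_lt b t hall hk2
        have hn : contRev (a :: b :: t) = contRev (b :: t) * a + contRev t := by
          rw [contRev_cons_eq]; ring
        have hdiv : contRev (a :: b :: t) / contRev (b :: t) = a := by
          rw [hn, Nat.mul_add_div (by omega), Nat.div_eq_of_lt hlt, Nat.add_zero]
        have hmod : contRev (a :: b :: t) % contRev (b :: t) = contRev t := by
          rw [hn, Nat.mul_add_mod, Nat.mod_eq_of_lt hlt]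
        rw [errN_of_two_le hk2, hdiv, hmod]
        simp only [List.map_cons, List.sum_cons] at ih ⊢
        simp only [List.tail_cons] at ih
        omega

section ZModPart
open ZMod

lemma interval_norm {n : ℕ} (hn : 0 < n) {I : Finset (ZMod n)} (h : IsInterval I) :
    ∃ a L : ℕ, L ≤ n ∧ I = (range L).image (fun i : ℕ => ((a + i : ℕ) : ZMod n)) := by
  obtain ⟨a, len, rfl⟩ := h
  refine ⟨a, min len n, min_le_right _ _, ?_⟩
  apply Finset.Subset.antisymm
  · intro x hx
    simp only [mem_image, mem_range] at hx ⊢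
    obtain ⟨i, hi, rfl⟩ := hx
    refine ⟨i % n, lt_min (lt_of_le_of_lt (Nat.mod_le i n) hi) (Nat.mod_lt i hn), ?_⟩
    exact (ZMod.natCast_eq_natCast_iff _ _ _).2 ((Nat.mod_modEq i n).add_left a)
  · exact Finset.image_subset_image (Finset.range_subset_range.2 (min_le_left _ _))

lemma interval_card {n : ℕ} (hn : 0 < n) (a L : ℕ) (hL : L ≤ n) :
    ((range L).image (fun i : ℕ => ((a + i : ℕ) : ZMod n))).card = L := by
  rw [Finset.card_image_of_injOn, Finset.card_range]
  intro i hi j hj hij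
  simp only [Finset.coe_range, Set.mem_Iio] at hi hj
  have h1 := (ZMod.natCast_eq_natCast_iff _ _ _).1 hij
  have h2 : i ≡ j [MOD n] := (Nat.ModEq.add_left_cancel' a h1)
  have h3 : i % n = j % n := h2
  rwa [Nat.mod_eq_of_lt (lt_of_lt_of_le hi hL), Nat.mod_eq_of_lt (lt_of_lt_of_le hj hL)] at h3

lemma mem_interval_iff {n : ℕ} [NeZero n] (b M : ℕ) (hM : M ≤ n) (x : ZMod n) :
    (x ∈ (range M).image (fun j : ℕ => ((b + j : ℕ) : ZMod n))
      ↔ (x - (b : ZMod n)).val < M) := by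
  simp only [mem_image, mem_range]
  have hn : 0 < n := Nat.pos_of_ne_zero (NeZero.ne n)
  constructor
  · rintro ⟨j, hj, rfl⟩
    have e : ((b + j : ℕ) : ZMod n) - (b : ZMod n) = (j : ZMod n) := by
      push_cast; ring
    rw [e, ZMod.val_natCast, Nat.mod_eq_of_lt (lt_of_lt_of_le hj hM)]
    exact hj
  · intro h
    refine ⟨(x - (b : ZMod n)).val, h, ?_⟩
    push_cast
    rw [ZMod.natCast_rightInverse (x - (b : ZMod n))]
    ring
end ZModPart


section CountPart

lemma psi_apply {n : ℕ} (k : (ZMod n)ˣ) (x : ZMod n) : psi k x = (k : ZMod n) * x := rfl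

lemma image_psi {n : ℕ} [NeZero n] (k : (ZMod n)ˣ) (a L : ℕ) :
    ((range L).image (fun i : ℕ => ((a + i : ℕ) : ZMod n))).image (psi k)
      = (range L).image (fun i : ℕ => (((k : ZMod n).val * (a + i) : ℕ) : ZMod n)) := by
  rw [Finset.image_image]
  apply Finset.image_congr
  intro i _
  simp only [Function.comp_apply]
  rw [psi_apply]
  push_cast
  rw [ZMod.natCast_rightInverse (k : ZMod n)]

lemma inj_mul_add {n : ℕ} [NeZero n] (k : (ZMod n)ˣ) (a L : ℕ) (hL : L ≤ n) :
    Set.InjOn (fun i : ℕ => (((k : ZMod n).val * (a + i) : ℕ) : ZMod n)) (range L) := by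
  have hn : 0 < n := Nat.pos_of_ne_zero (NeZero.ne n)
  intro i hi j hj hij
  simp only [Finset.coe_range, Set.mem_Iio] at hi hj
  simp only at hij
  have h1 : (k : ZMod n) * ((a + i : ℕ) : ZMod n) = (k : ZMod n) * ((a + j : ℕ) : ZMod n) := by
    push_cast at hij ⊢
    rw [← ZMod.natCast_rightInverse (k : ZMod n)]
    push_cast
    exact hij
  have h2 : ((a + i : ℕ) : ZMod n) = ((a + j : ℕ) : ZMod n) := by
    have := congrArg (fun z => ((k⁻¹ : (ZMod n)ˣ) : ZMod n) * z) h1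
    simpa [← mul_assoc, Units.inv_mul_cancel_left] using this
  have h3 := (ZMod.natCast_eq_natCast_iff _ _ _).1 h2
  have h4 : i % n = j % n := Nat.ModEq.add_left_cancel' a h3
  rwa [Nat.mod_eq_of_lt (lt_of_lt_of_le hi hL), Nat.mod_eq_of_lt (lt_of_lt_of_le hj hL)] at h4

lemma count_eq_Gcnt {n : ℕ} [NeZero n] (k : (ZMod n)ˣ) (a b L M : ℕ)
    (hL : L ≤ n) (hM : M ≤ n) :
    ((((range L).image (fun i : ℕ => ((a + i : ℕ) : ZMod n))).image (psi k))
        ∩ ((range M).image (fun j : ℕ => ((b + j : ℕ) : ZMod n)))).card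
      = Gcnt n ((k : ZMod n).val)
          (((k : ZMod n).val * a + (n - b % n)) % n) L M := by
  have hn : 0 < n := Nat.pos_of_ne_zero (NeZero.ne n)
  set kv := (k : ZMod n).val with hkv
  set J := (range M).image (fun j : ℕ => ((b + j : ℕ) : ZMod n)) with hJ
  set f := fun i : ℕ => ((kv * (a + i) : ℕ) : ZMod n) with hf
  rw [image_psi k a L]
  have hsplit : (range L).image f ∩ J = ((range L).filter (fun i => f i ∈ J)).image f := by
    ext x
    simp only [Finset.mem_inter, Finset.mem_image, Finset.mem_filter]
    constructor
    · rintro ⟨⟨i, hi, rfl⟩, hxJ⟩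
      exact ⟨i, ⟨hi, hxJ⟩, rfl⟩
    · rintro ⟨i, ⟨hi, hiJ⟩, rfl⟩
      exact ⟨⟨i, hi, rfl⟩, hiJ⟩
  rw [hsplit, Finset.card_image_of_injOn
    ((inj_mul_add k a L hL).mono (by
      intro x hx
      simp only [Finset.coe_filter, Set.mem_setOf_eq, Finset.mem_range] at hx
      simp only [Finset.coe_range, Set.mem_Iio]
      exact hx.1))]
  rw [Gcnt]
  congr 1
  apply Finset.filter_congr
  intro i _
  rw [hJ, mem_interval_iff b M hM]
  have e : f i - (b : ZMod n) = ((kv * i + (kv * a + (n - b % n)) % n : ℕ) : ZMod n) := by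
    rw [hf]
    simp only
    have hb : ((n - b % n : ℕ) : ZMod n) = -(b : ZMod n) := by
      have hbn : b % n ≤ n := le_of_lt (Nat.mod_lt _ hn)
      rw [Nat.cast_sub hbn, ZMod.natCast_self, ZMod.natCast_mod]
      ring
    push_cast
    rw [ZMod.natCast_mod]
    push_cast
    rw [hb]
    ring
  rw [e, ZMod.val_natCast]

lemma discIn_le_errN {n : ℕ} (hn2 : 2 ≤ n) (k : (ZMod n)ˣ)
    (I J : Finset (ZMod n)) (hI : IsInterval I) (hJ : IsInterval J) :
    discIn (I.image (psi k)) J ≤ errN n ((k : ZMod n).val) := by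
  have hn : 0 < n := by omega
  haveI : NeZero n := ⟨by omega⟩
  obtain ⟨a, L, hL, rfl⟩ := interval_norm hn hI
  obtain ⟨b, M, hM, rfl⟩ := interval_norm hn hJ
  have hcardI : ((range L).image (fun i : ℕ => ((a + i : ℕ) : ZMod n))).card = L :=
    interval_card hn a L hL
  have hcardJ : ((range M).image (fun j : ℕ => ((b + j : ℕ) : ZMod n))).card = M :=
    interval_card hn b M hM
  have hcardS : (((range L).image (fun i : ℕ => ((a + i : ℕ) : ZMod n))).image (psi k)).card
      = L := by
    rw [Finset.card_image_of_injective _ (psi k).injective, hcardI]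
  rw [discIn, hcardS, hcardJ, count_eq_Gcnt k a b L M hL hM]
  have hkv : (k : ZMod n).val < n := ZMod.val_lt _
  have hcop : Nat.Coprime n ((k : ZMod n).val) := (ZMod.val_coe_unit_coprime k).symm
  exact Gcnt_bound _ n _ L M hn hkv hcop (Nat.mod_lt _ hn) hL hM

end CountPart


lemma map_sum_aux : ∀ l : List ℕ, (l.map (fun a => 6*a + 12)).sum = 6*l.sum + 12*l.length
  | [] => by simp
  | a :: t => by
      simp only [List.map_cons, List.sum_cons, List.length_cons, List.sum_cons,
        map_sum_aux t]
      ring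

lemma discIn_zmod_one (S T : Finset (ZMod 1)) : discIn S T = 0 := by
  have hcard : Fintype.card (ZMod 1) = 1 := by simp
  have huniv : ∀ S : Finset (ZMod 1), S = ∅ ∨ S = Finset.univ := by
    intro S
    rcases S.eq_empty_or_nonempty with h | h
    · left; exact h
    · right
      apply Finset.eq_univ_of_card
      have h1 : 1 ≤ S.card := Finset.card_pos.2 h
      have h2 : S.card ≤ Fintype.card (ZMod 1) := Finset.card_le_univ S
      omega
  have hcu : (Finset.univ : Finset (ZMod 1)).card = 1 := by
    rw [Finset.card_univ, hcard]
  rcases huniv S with rfl | rfl <;> rcases huniv T with rfl | rfl <;>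
    simp [discIn, hcu] <;> norm_num


/-- For each `B ≥ 1` there is `C = C(B)` such that: if `a₁,…,a_m` are positive integers
whose partial sums satisfy `(1/j)·Σ_{i=1}^j aᵢ ≤ B` for all `1 ≤ j ≤ m`, and
`n = K(a₁,…,a_m)` is the continuant, then `min_{k ∈ (ZMod n)ˣ} D(ψ_k) ≤ C·log n`. -/
theorem stmt_16 (B : ℝ) (hB : 1 ≤ B) :
    ∃ C : ℝ, ∀ l : List ℕ, (∀ a ∈ l, 1 ≤ a) →
      (∀ j : ℕ, 1 ≤ j → j ≤ l.length → ((l.take j).sum : ℝ) ≤ B * j) →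
      ∀ n : ℕ, n = continuant l →
      ∃ k : (ZMod n)ˣ, disc (psi k) ≤ C * Real.log n := by


  refine ⟨(6*B + 13) * (4 / Real.log 2), ?_⟩
  intro l hpos hsum n hn
  have hpos' : ∀ a ∈ l.reverse, 1 ≤ a := fun a ha => hpos a (List.mem_reverse.1 ha)
  have hnval : n = contRev l.reverse := hn
  have hnpos : 1 ≤ n := hnval ▸ contRev_pos l.reverse hpos'
  have hlog2 : (0:ℝ) < Real.log 2 := Real.log_pos (by norm_num)
  have hC0 : (0:ℝ) ≤ (6*B + 13) * (4 / Real.log 2) :=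
    mul_nonneg (by linarith) (by positivity)
  rcases eq_or_lt_of_le hnpos with h1 | hn2
  · -- n = 1
    subst h1
    refine ⟨1, ?_⟩
    have hlogn : Real.log (1:ℕ) = 0 := by simp
    rw [hlogn, mul_zero]
    apply Real.sSup_le _ le_rfl
    rintro d ⟨I, J, hI, hJ, rfl⟩
    exact le_of_eq (discIn_zmod_one _ _)
  · -- n ≥ 2
    have hn2' : 2 ≤ n := hn2
    have hlne : l.reverse ≠ [] := by
      intro h
      rw [h] at hnval
      simp [contRev] at hnval
      omega
    obtain ⟨a0, t0, hlt⟩ : ∃ a t, l.reverse = a :: t := by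
      cases hc : l.reverse with
      | nil => exact absurd hc hlne
      | cons x y => exact ⟨x, y, rfl⟩
    set kt := contRev l.reverse.tail with hkt
    have hcop : Nat.Coprime n kt := by
      rw [hnval, hkt]; exact contRev_coprime l.reverse hpos'
    have hktn : kt < n := by
      rw [hnval, hkt, hlt]
      simp only [List.tail_cons]
      exact contRev_tail_lt a0 t0 (hlt ▸ hpos') (by rw [← hlt, ← hnval]; omega)
    haveI : NeZero n := ⟨by omega⟩
    refine ⟨ZMod.unitOfCoprime kt hcop.symm, ?_⟩
    have hval : ((ZMod.unitOfCoprime kt hcop.symm : (ZMod n)ˣ) : ZMod n).val = kt := by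
      rw [ZMod.coe_unitOfCoprime, ZMod.val_natCast, Nat.mod_eq_of_lt hktn]
    apply Real.sSup_le
    swap
    · exact mul_nonneg hC0 (Real.log_nonneg (by exact_mod_cast hnpos))
    rintro d ⟨I, J, hI, hJ, rfl⟩
    have hd := discIn_le_errN hn2' (ZMod.unitOfCoprime kt hcop.symm) I J hI hJ
    rw [hval] at hd
    refine le_trans hd ?_
    have e1 : errN n kt ≤ (l.reverse.map (fun a => 6*a + 12)).sum + 1 := by
      rw [hnval, hkt]; exact errN_le_sum l.reverse hpos'
    rw [map_sum_aux, List.sum_reverse, List.length_reverse] at e1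
    set m := l.length with hm
    have hm1 : 1 ≤ m := by
      rw [hm]
      have := @List.length_reverse _ l
      rw [hlt] at this
      simp at this
      omega
    have hsum' : (l.sum : ℝ) ≤ B * m := by
      have h9 := hsum m hm1 le_rfl
      rwa [hm, List.take_length] at h9
    have hgrow : 2^(m / 2) ≤ n := by
      have h9 := two_pow_le_contRev l.reverse hpos'
      rw [List.length_reverse, ← hnval] at h9
      exact h9
    have hgrowR : ((2:ℝ))^(m / 2) ≤ n := by exact_mod_cast hgrow
    have hlogn : ((m/2 : ℕ) : ℝ) * Real.log 2 ≤ Real.log n := by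
      rw [← Real.log_pow]
      exact Real.log_le_log (by positivity) hgrowR
    have hloggeq : Real.log 2 ≤ Real.log n :=
      Real.log_le_log (by norm_num) (by exact_mod_cast hn2')
    have hmle : (m : ℝ) + 1 ≤ 4 / Real.log 2 * Real.log n := by
      have hnat : m + 1 ≤ 2*(m/2) + 2 := by omega
      have hr1 : (m:ℝ) + 1 ≤ 2*((m/2 : ℕ):ℝ) + 2 := by exact_mod_cast hnat
      have hr2 : ((m/2:ℕ):ℝ) ≤ Real.log n / Real.log 2 := by
        rw [le_div_iff₀ hlog2]; exact hlogn
      have hr3 : (2:ℝ) ≤ 2 * (Real.log n / Real.log 2) := by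
        have h9 : (1:ℝ) ≤ Real.log n / Real.log 2 := by
          rw [le_div_iff₀ hlog2]; linarith
        linarith
      have hr4 : 2*(Real.log n/Real.log 2) + 2*(Real.log n/Real.log 2)
          = 4/Real.log 2 * Real.log n := by ring
      linarith
    have eR : (errN n kt : ℝ) ≤ 6*(l.sum:ℝ) + 12*m + 1 := by
      have h9 : ((errN n kt : ℕ) : ℝ) ≤ ((6*l.sum + 12*m + 1 : ℕ) : ℝ) := by
        exact_mod_cast e1
      push_cast [-Nat.cast_list_sum] at h9
      linarith
    have hm0 : (0:ℝ) ≤ m := Nat.cast_nonneg m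
    calc (errN n kt : ℝ) ≤ 6*(l.sum:ℝ) + 12*m + 1 := eR
    _ ≤ 6*(B*m) + 12*m + 1 := by linarith
    _ ≤ (6*B + 13) * ((m:ℝ) + 1) := by
        have h9 : (6*B + 13) * ((m:ℝ) + 1)
            = 6*(B*m) + 12*m + 1 + (6*B + m + 12) := by ring
        linarith
    _ ≤ (6*B + 13) * (4/Real.log 2 * Real.log n) := by
        apply mul_le_mul_of_nonneg_left hmle (by linarith)
    _ = (6*B+13) * (4/Real.log 2) * Real.log n := by ring
end

section
/- Let σ be a permutation of [n] = {1,…,n}, and define B_σ(k) = |{1 ≤ q ≤ k : σ(q) ≤ σ(k)}| and A_σ = {B_σ(k) : k ∈ [n]}. Then every interval of real numbers of length √(32·n·D(σ)) that is contained in [1, n] contains an element of A_σ, where D(σ) is the discrepancy of σ regarded as a permutation of Z_n via the identification of [n] with Z_n. -/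
open Finset

/-!
Counting the points `(q, σ q)` in the box `[1, k] × [1, σ k]` and comparing with the box's area
gives `B_σ(k) = k σ(k) / n ± D`. If no `B_σ(k)` fell in `[u, u + L]`, no point `(k, σ k)` would lie
in the hyperbolic band `u + D ≤ x y / n ≤ u + L - D`. That band contains a grid box of sides
about `L / 2`, whereas by the discrepancy bound an empty `s × m` box has `s m ≤ n D = L² / 32`.
-/

section Discrepancy

variable {n : ℕ} [NeZero n] (σ : Equiv.Perm (ZMod n))

theorem bddAbove_discIn_image_intervals :
    BddAbove {d : ℝ | ∃ I J : Finset (ZMod n),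
      IsInterval I ∧ IsInterval J ∧ d = discIn (I.image σ) J} := by
  refine ((Set.finite_range fun p : Finset (ZMod n) × Finset (ZMod n) =>
    discIn (p.1.image σ) p.2).subset ?_).bddAbove
  rintro d ⟨I, J, -, -, rfl⟩
  exact ⟨(I, J), rfl⟩

theorem discIn_le_disc {I J : Finset (ZMod n)} (hI : IsInterval I) (hJ : IsInterval J) :
    discIn (I.image σ) J ≤ disc σ :=
  le_csSup (bddAbove_discIn_image_intervals σ) ⟨I, J, hI, hJ, rfl⟩

theorem one_sub_inv_le_disc : 1 - 1 / (n : ℝ) ≤ disc σ := by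
  have hn : (1 : ℝ) ≤ n := by exact_mod_cast NeZero.one_le
  have hsingleton (z : ZMod n) : IsInterval {z} := ⟨z.val, 1, by simp⟩
  calc 1 - 1 / (n : ℝ) = discIn (({0} : Finset (ZMod n)).image σ) {σ 0} := by
        simp [discIn, abs_of_nonneg (sub_nonneg.mpr (inv_le_one_of_one_le₀ hn))]
    _ ≤ disc σ := discIn_le_disc σ (hsingleton 0) (hsingleton (σ 0))

end Discrepancy

section Box

variable {n : ℕ}

def succToZMod (k : Fin n) : ZMod n := ((k : ℕ) + 1 : ℕ)

theorem succToZMod_injective : Function.Injective (succToZMod (n := n)) := by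
  intro k l h
  simp only [succToZMod, Nat.cast_succ, add_left_inj, ZMod.natCast_eq_natCast_iff'] at h
  rwa [Nat.mod_eq_of_lt k.isLt, Nat.mod_eq_of_lt l.isLt, ← Fin.ext_iff] at h

def finIco (n a s : ℕ) : Finset (Fin n) := univ.filter fun k => a ≤ (k : ℕ) ∧ (k : ℕ) < a + s

theorem card_finIco {a s : ℕ} (h : a + s ≤ n) : #(finIco n a s) = s := by
  have : (finIco n a s).map Fin.valEmbedding = Ico a (a + s) := by
    ext x
    simp only [finIco, mem_map, mem_filter, mem_univ, true_and, Fin.valEmbedding_apply, mem_Ico]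
    exact ⟨by rintro ⟨k, hk, rfl⟩; exact hk, fun hx => ⟨⟨x, by omega⟩, hx, rfl⟩⟩
  rw [← card_map, this, Nat.card_Ico, Nat.add_sub_cancel_left]

theorem isInterval_image_succToZMod_finIco {a s : ℕ} (h : a + s ≤ n) :
    IsInterval ((finIco n a s).image succToZMod) := by
  refine ⟨a + 1, s, ?_⟩
  ext z
  simp only [finIco, mem_image, mem_filter, mem_univ, true_and, mem_range, succToZMod]
  constructor
  · rintro ⟨k, hk, rfl⟩
    exact ⟨k - a, by omega, by congr 1; omega⟩
  · rintro ⟨i, hi, rfl⟩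
    exact ⟨⟨a + i, by omega⟩, by simp only; omega, by simp only; congr 1; omega⟩

variable [NeZero n] (σ : Equiv.Perm (Fin n)) (σZ : Equiv.Perm (ZMod n))
  (hσ : ∀ k, σZ (succToZMod k) = succToZMod (σ k))
include hσ

theorem abs_card_box_sub_le_disc {a s c m : ℕ} (has : a + s ≤ n) (hcm : c + m ≤ n) :
    |(#{k ∈ finIco n a s | σ k ∈ finIco n c m} : ℝ) - s * m / n| ≤ disc σZ := by
  have hcomm : ((finIco n a s).image succToZMod).image σZ =
      ((finIco n a s).image σ).image succToZMod := by
    simp only [image_image, Function.comp_def, hσ]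
  have hdisc : discIn (((finIco n a s).image succToZMod).image σZ)
      ((finIco n c m).image succToZMod) =
      |(#{k ∈ finIco n a s | σ k ∈ finIco n c m} : ℝ) - s * m / n| := by
    rw [discIn, hcomm, ← image_inter _ _ succToZMod_injective, ← filter_mem_eq_inter,
      filter_image]
    simp only [card_image_of_injective _ succToZMod_injective,
      card_image_of_injective _ σ.injective, card_finIco has, card_finIco hcm]
  exact hdisc ▸ discIn_le_disc σZ (isInterval_image_succToZMod_finIco has)
    (isInterval_image_succToZMod_finIco hcm)

theorem mul_le_mul_disc_of_box_empty {a s c m : ℕ} (has : a + s ≤ n) (hcm : c + m ≤ n)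
    (hempty : ∀ k ∈ finIco n a s, σ k ∉ finIco n c m) : (s : ℝ) * m ≤ n * disc σZ := by
  have hbox := abs_card_box_sub_le_disc σ σZ hσ has hcm
  rw [filter_false_of_mem hempty, card_empty, Nat.cast_zero, zero_sub, abs_neg,
    abs_of_nonneg (by positivity), div_le_iff₀ (by exact_mod_cast NeZero.pos n)] at hbox
  linarith

theorem abs_Bperm_sub_le_disc (k : Fin n) :
    |(Bperm n σ k : ℝ) - ((k : ℕ) + 1) * ((σ k : ℕ) + 1) / n| ≤ disc σZ := by
  have hB : Bperm n σ k = #{q ∈ finIco n 0 (k + 1) | σ q ∈ finIco n 0 (σ k + 1)} := by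
    simp only [Bperm, finIco, filter_filter, mem_filter, mem_univ, true_and, Fin.le_def]
    congr 1
    ext q
    simp only [mem_filter, mem_univ, true_and]
    omega
  rw [hB]
  exact_mod_cast abs_card_box_sub_le_disc σ σZ hσ (a := 0) (c := 0)
    (by simp [Nat.succ_le_of_lt k.isLt]) (by simp [Nat.succ_le_of_lt (σ k).isLt])

theorem Bperm_mem_Icc_of_mem_band {k : Fin n} {lo hi : ℝ}
    (hlo : lo * n ≤ ((k : ℕ) + 1) * ((σ k : ℕ) + 1))
    (hhi : ((k : ℕ) + 1) * ((σ k : ℕ) + 1) ≤ hi * n) :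
    (Bperm n σ k : ℝ) ∈ Set.Icc (lo - disc σZ) (hi + disc σZ) := by
  have hn : (0 : ℝ) < n := by exact_mod_cast NeZero.pos n
  have hB := abs_le.mp (abs_Bperm_sub_le_disc σ σZ hσ k)
  rw [← le_div_iff₀ hn] at hlo
  rw [← div_le_iff₀ hn] at hhi
  constructor <;> linarith [hB.1, hB.2]

end Box

theorem exists_box_in_band {n : ℕ} {lo hi : ℝ} (hlo : 0 < lo) (hlohi : lo ≤ hi) (hhi : hi ≤ n) :
    ∃ a s c m : ℕ, a + s ≤ n ∧ c + m ≤ n ∧ (hi - lo) / 2 - 1 ≤ s ∧ (hi - lo) / 2 ≤ m ∧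
      ∀ x y : ℕ, a ≤ x → x < a + s → c ≤ y → y < c + m →
        lo * n ≤ (x + 1) * (y + 1) ∧ (x + 1) * (y + 1) ≤ hi * n := by
  -- The box is `[p, hi] × [n lo / p, n]` (one-indexed), `p` the midpoint of `[lo, hi]`.
  set p := (lo + hi) / 2 with hp_def
  set q := n * lo / p with hq_def
  have hlop : lo ≤ p := by linarith
  have hp : 0 < p := by linarith
  have hpn : p ≤ n := by linarith
  have hq : 0 < q := div_pos (mul_pos (by linarith) hlo) hp
  have hqn : q ≤ n := div_le_of_le_mul₀ hp.le (Nat.cast_nonneg n) (by nlinarith)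
  have hpq : p * q = lo * n := by rw [hq_def]; field_simp
  have hp1 : 1 ≤ ⌈p⌉₊ := Nat.ceil_pos.mpr hp
  have hq1 : 1 ≤ ⌈q⌉₊ := Nat.ceil_pos.mpr hq
  have hpn' : ⌈p⌉₊ ≤ n := Nat.ceil_le.mpr hpn
  have hhin : ⌊hi⌋₊ ≤ n := Nat.floor_le_of_le hhi
  have hqn' : ⌈q⌉₊ ≤ n := Nat.ceil_le.mpr hqn
  refine ⟨⌈p⌉₊ - 1, ⌊hi⌋₊ - (⌈p⌉₊ - 1), ⌈q⌉₊ - 1, n - (⌈q⌉₊ - 1), by omega, by omega, ?_, ?_, ?_⟩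
  · have hs : ((⌊hi⌋₊ + 1 : ℕ) : ℝ) ≤ ((⌊hi⌋₊ - (⌈p⌉₊ - 1) + ⌈p⌉₊ : ℕ) : ℝ) := by
      exact_mod_cast (by omega : ⌊hi⌋₊ + 1 ≤ ⌊hi⌋₊ - (⌈p⌉₊ - 1) + ⌈p⌉₊)
    push_cast at hs
    linarith [Nat.lt_floor_add_one hi, Nat.ceil_lt_add_one hp.le]
  · have hm : ((n + 1 : ℕ) : ℝ) ≤ ((n - (⌈q⌉₊ - 1) + ⌈q⌉₊ : ℕ) : ℝ) := by
      exact_mod_cast (by omega : n + 1 ≤ n - (⌈q⌉₊ - 1) + ⌈q⌉₊)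
    push_cast at hm
    have : p - lo ≤ n - q := by
      rw [show (n : ℝ) - q = n * (p - lo) / p by rw [hq_def]; field_simp, le_div_iff₀ hp]
      rw [mul_comm]
      exact mul_le_mul_of_nonneg_right hpn (sub_nonneg.mpr hlop)
    linarith [Nat.ceil_lt_add_one hq.le]
  · intro x y hax hxs hcy hym
    have hx : p ≤ x + 1 := (Nat.le_ceil p).trans (by exact_mod_cast (by omega : ⌈p⌉₊ ≤ x + 1))
    have hx' : (x : ℝ) + 1 ≤ hi :=
      le_trans (by exact_mod_cast (by omega : x + 1 ≤ ⌊hi⌋₊)) (Nat.floor_le (by linarith))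
    have hy : q ≤ y + 1 := (Nat.le_ceil q).trans (by exact_mod_cast (by omega : ⌈q⌉₊ ≤ y + 1))
    have hy' : (y : ℝ) + 1 ≤ n := by exact_mod_cast (by omega : y + 1 ≤ n)
    constructor
    · rw [← hpq]
      exact mul_le_mul hx hy hq.le (by positivity)
    · exact mul_le_mul hx' hy' (by positivity) (by linarith)

/-- Every real interval of length `√(32·n·D(σ))` contained in `[1, n]` contains an element
of `A_σ = {B_σ(k) : k ∈ [n]}`.  Here `σ` is a permutation of `[n]` (realized, zero-indexed,
as a permutation of `Fin n`), and `σZ` is `σ` regarded as a permutation of `ZMod n` via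
the identification `t ↦ t mod n` of `[n] = {1,…,n}` with `ZMod n`. -/
theorem stmt_18 (n : ℕ) (hn : 1 ≤ n) (σ : Equiv.Perm (Fin n))
    (σZ : Equiv.Perm (ZMod n))
    (hσ : ∀ k : Fin n, σZ (((k : ℕ) + 1 : ℕ) : ZMod n) = (((σ k : ℕ) + 1 : ℕ) : ZMod n))
    (u : ℝ) (hu : 1 ≤ u)
    (huv : u + Real.sqrt (32 * (n : ℝ) * disc σZ) ≤ (n : ℝ)) :
    ∃ k : Fin n, (Bperm n σ k : ℝ) ∈ Set.Icc u (u + Real.sqrt (32 * (n : ℝ) * disc σZ)) := by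
  have : NeZero n := ⟨by omega⟩
  set D := disc σZ with hD_def
  set L := √(32 * (n : ℝ) * D)
  have hL0 : 0 ≤ L := Real.sqrt_nonneg _
  rcases hn.eq_or_lt with rfl | hn2
  · rw [Nat.cast_one] at huv
    exact ⟨0, by simp [Bperm]; linarith, by simp [Bperm]; linarith⟩
  have hnR : (2 : ℝ) ≤ n := by exact_mod_cast hn2
  have hnD : (n : ℝ) - 1 ≤ n * D := by
    have := mul_le_mul_of_nonneg_left (one_sub_inv_le_disc σZ) (by linarith : (0 : ℝ) ≤ n)
    rwa [mul_sub, mul_one, mul_one_div_cancel (by linarith)] at this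
  have hD0 : 0 < D := by nlinarith
  have hL2 : L ^ 2 = 32 * n * D := Real.sq_sqrt (by nlinarith)
  have hL32 : 32 ≤ L := by nlinarith
  have hDL : 32 * D < L := by nlinarith
  by_contra! hgap
  obtain ⟨a, s, c, m, has, hcm, hs, hm, hband⟩ :=
    exists_box_in_band (n := n) (lo := u + D) (hi := u + L - D) (by linarith) (by linarith)
      (by linarith)
  have hsm : (s : ℝ) * m ≤ n * D := mul_le_mul_disc_of_box_empty σ σZ hσ has hcm fun k hk hσk => by
    simp only [finIco, mem_filter, mem_univ, true_and] at hk hσk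
    obtain ⟨hlo, hhi⟩ := hband k (σ k) hk.1 hk.2 hσk.1 hσk.2
    have hB := Bperm_mem_Icc_of_mem_band σ σZ hσ hlo hhi
    rw [← hD_def, sub_add_cancel, add_sub_cancel_right] at hB
    exact hgap k hB
  nlinarith [mul_le_mul hs hm (by linarith) (by positivity)]
end
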